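/- arXiv:2602.21630 — 5 statements merged into one kernel-verified Lean document; each statement's English description precedes it below -/
import Mathlib

section
/- If a choreography (without procedure calls) is typable at program counter pc with ¬(pc ⊑ low), then every assignment and every communication occurring in it (including inside conditional branches) targets a location p.x with ¬(Γ p x ⊑ low). -/
inductive Expr (FName Var Val : Type) where
  | const (v : Val)
  | var (x : Var)
  | app (f : FName) (args : List (Expr FName Var Val))

variable {FName Var Val PName SLbl : Type} {L : Type} [CompleteLattice L]

/-- Security label of an expression under a process labelling γ. -/
def Expr.label (γ : Var → L) : Expr FName Var Val → L
  | .const _ => ⊥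
  | .var x => γ x
  | .app _ es => es.attach.foldr (fun e acc => e.1.label γ ⊔ acc) ⊥
decreasing_by have := List.sizeOf_lt_of_mem e.2; simp_wf; omega

/-- Choreographies: nil, and instruction sequencing for assignment,
    communication, selection and conditional (whose branches are
    choreographies). -/
inductive Chor (PName FName Var Val SLbl : Type) where
  | nil
  | assign (p : PName) (x : Var) (e : Expr FName Var Val)
      (C : Chor PName FName Var Val SLbl)
  | com (p : PName) (e : Expr FName Var Val) (q : PName) (x : Var)
      (C : Chor PName FName Var Val SLbl)
  | sel (p q : PName) (l : SLbl) (C : Chor PName FName Var Val SLbl)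
  | cond (p : PName) (e : Expr FName Var Val)
      (C₁ C₂ : Chor PName FName Var Val SLbl)
      (C : Chor PName FName Var Val SLbl)

/-- The information-flow typing judgement `Γ; pc ⊢ C` (no procedure calls). -/
inductive WT (Γ : PName → Var → L) : L → Chor PName FName Var Val SLbl → Prop where
  | nil (pc : L) : WT Γ pc .nil
  | assign {pc p x e C} :
      e.label (Γ p) ⊔ pc ≤ Γ p x → WT Γ pc C → WT Γ pc (.assign p x e C)
  | com {pc p e q x C} :
      e.label (Γ p) ⊔ pc ≤ Γ q x → WT Γ pc C → WT Γ pc (.com p e q x C)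
  | sel {pc p q l C} : WT Γ pc C → WT Γ pc (.sel p q l C)
  | cond {pc p e C₁ C₂ C} :
      WT Γ (pc ⊔ e.label (Γ p)) C₁ → WT Γ (pc ⊔ e.label (Γ p)) C₂ →
      WT Γ pc C → WT Γ pc (.cond p e C₁ C₂ C)

/-- `WritesTo C p x` holds when some assignment or communication occurring in
    `C` (including inside conditional branches) targets location `p.x`. -/
inductive WritesTo : Chor PName FName Var Val SLbl → PName → Var → Prop where
  | assign_here {p x e C} : WritesTo (.assign p x e C) p x
  | assign_cont {p x e C q y} : WritesTo C q y → WritesTo (.assign p x e C) q y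
  | com_here {p e q x C} : WritesTo (.com p e q x C) q x
  | com_cont {p e q x C r y} : WritesTo C r y → WritesTo (.com p e q x C) r y
  | sel_cont {p q l C r y} : WritesTo C r y → WritesTo (.sel p q l C) r y
  | cond_then {p e C₁ C₂ C r y} : WritesTo C₁ r y → WritesTo (.cond p e C₁ C₂ C) r y
  | cond_else {p e C₁ C₂ C r y} : WritesTo C₂ r y → WritesTo (.cond p e C₁ C₂ C) r y
  | cond_cont {p e C₁ C₂ C r y} : WritesTo C r y → WritesTo (.cond p e C₁ C₂ C) r y

/-- In a choreography typable at a high pc, every write targets a high location. -/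
theorem WT_high_pc_writes_high (Γ : PName → Var → L) (low pc : L)
    (C : Chor PName FName Var Val SLbl)
    (h : WT Γ pc C) (hpc : ¬ pc ≤ low) :
    ∀ p x, WritesTo C p x → ¬ Γ p x ≤ low := by
  intro p x hw
  induction hw generalizing pc with
  | assign_here =>
    cases h with
    | assign hle _ =>
      intro hlow
      exact hpc (le_trans (le_trans le_sup_right hle) hlow)
  | assign_cont _ ih => cases h with | assign _ hC => exact ih _ hC hpc
  | com_here =>
    cases h with
    | com hle _ =>
      intro hlow
      exact hpc (le_trans (le_trans le_sup_right hle) hlow)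
  | com_cont _ ih => cases h with | com _ hC => exact ih _ hC hpc
  | sel_cont _ ih => cases h with | sel hC => exact ih _ hC hpc
  | cond_then _ ih =>
    cases h with
    | cond h1 _ _ => exact ih _ h1 (fun hle => hpc (le_trans le_sup_left hle))
  | cond_else _ ih =>
    cases h with
    | cond _ h2 _ => exact ih _ h2 (fun hle => hpc (le_trans le_sup_left hle))
  | cond_cont _ ih =>
    cases h with
    | cond _ _ hC => exact ih _ hC hpc
end

section
/- High-pc executions preserve low-equivalence with the initial store: if a choreography C without procedure calls is typable at pc with ¬(pc ⊑ low), and ⟨C, Σ⟩ evaluates (big-step) to Σ', then Σ ≡_low Σ' (the execution modifies only high locations). -/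
variable {FName Var Val PName SLbl : Type} {L : Type} [CompleteLattice L]

/-- Evaluation of expressions, with fixed interpretations of function symbols. -/
def Expr.eval (F : FName → List Val → Val) (σ : Var → Val) : Expr FName Var Val → Val
  | .const v => v
  | .var x => σ x
  | .app f es => F f (es.attach.map (fun e => e.1.eval F σ))
decreasing_by have := List.sizeOf_lt_of_mem e.2; simp_wf; omega

/-- A choreographic store assigns values to the variables of each process. -/
def CStore (PName Var Val : Type) := PName → Var → Val

variable [DecidableEq PName] [DecidableEq Var]

/-- Store update at process `p`, variable `x`. -/
def CStore.upd (S : CStore PName Var Val) (p : PName) (x : Var) (v : Val) :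
    CStore PName Var Val :=
  fun q => if q = p then Function.update (S p) x v else S q

/-- Low-equivalence of stores w.r.t. Γ and low. -/
def lowEquiv (Γ : PName → Var → L) (low : L)
    (S₁ S₂ : CStore PName Var Val) : Prop :=
  ∀ p x, Γ p x ≤ low → S₁ p x = S₂ p x

/-- The continuation-grafting operator `C₁ ⨟ C`: replaces every nil leaf of
    `C₁` by `C` (conditionals graft into the outer continuation only). -/
def Chor.graft : Chor PName FName Var Val SLbl → Chor PName FName Var Val SLbl →
    Chor PName FName Var Val SLbl
  | .nil, C => C
  | .assign p x e C', C => .assign p x e (C'.graft C)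
  | .com p e q x C', C => .com p e q x (C'.graft C)
  | .sel p q l C', C => .sel p q l (C'.graft C)
  | .cond p e C₁ C₂ C', C => .cond p e C₁ C₂ (C'.graft C)

/-- Big-step semantics. `tt` is the distinguished truth value used by guards. -/
inductive Eval (F : FName → List Val → Val) (tt : Val) :
    Chor PName FName Var Val SLbl → CStore PName Var Val → CStore PName Var Val → Prop where
  | nil {S} : Eval F tt .nil S S
  | assign {p x e C S S'} :
      Eval F tt C (S.upd p x (e.eval F (S p))) S' → Eval F tt (.assign p x e C) S S'
  | com {p e q x C S S'} :
      Eval F tt C (S.upd q x (e.eval F (S p))) S' → Eval F tt (.com p e q x C) S S'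
  | sel {p q l C S S'} : Eval F tt C S S' → Eval F tt (.sel p q l C) S S'
  | cond_then {p e C₁ C₂ C S S'} :
      e.eval F (S p) = tt → Eval F tt (C₁.graft C) S S' →
      Eval F tt (.cond p e C₁ C₂ C) S S'
  | cond_else {p e C₁ C₂ C S S'} :
      e.eval F (S p) ≠ tt → Eval F tt (C₂.graft C) S S' →
      Eval F tt (.cond p e C₁ C₂ C) S S'

theorem WT.graft {Γ : PName → Var → L} {pc : L}
    {C₁ C : Chor PName FName Var Val SLbl}
    (h₁ : WT Γ pc C₁) (h : WT Γ pc C) : WT Γ pc (C₁.graft C) := by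
  induction h₁ with
  | nil => exact h
  | assign hle _ ih => exact .assign hle (ih h)
  | com hle _ ih => exact .com hle (ih h)
  | sel _ ih => exact .sel (ih h)
  | cond h1 h2 _ _ _ ih =>
    exact .cond h1 h2 (ih h)

theorem WT.mono' {Γ : PName → Var → L} {pc pc' : L}
    {C : Chor PName FName Var Val SLbl}
    (h : WT Γ pc C) (hle : pc' ≤ pc) : WT Γ pc' C := by
  induction h generalizing pc' with
  | nil => exact .nil _
  | assign hl _ ih =>
    exact .assign (le_trans (sup_le_sup_left hle _) hl) (ih hle)
  | com hl _ ih =>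
    exact .com (le_trans (sup_le_sup_left hle _) hl) (ih hle)
  | sel _ ih => exact .sel (ih hle)
  | cond h1 h2 _ ih1 ih2 ih3 =>
    exact .cond (ih1 (sup_le_sup_right hle _)) (ih2 (sup_le_sup_right hle _))
      (ih3 hle)

/-- High-pc executions preserve low-equivalence with the initial store. -/
theorem high_pc_eval_lowEquiv (Γ : PName → Var → L) (low pc : L)
    (F : FName → List Val → Val) (tt : Val)
    (C : Chor PName FName Var Val SLbl) (S S' : CStore PName Var Val)
    (hwt : WT Γ pc C) (hpc : ¬ pc ≤ low)
    (heval : Eval F tt C S S') :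
    lowEquiv Γ low S S' := by
  induction heval generalizing pc with
  | nil => exact fun p x _ => rfl
  | @assign p x e C S S' _ ih =>
    rcases hwt with _ | ⟨hle, hC⟩ | _
    intro q y hy
    have h1 := ih _ hC hpc q y hy
    rw [← h1]
    simp only [CStore.upd]
    split
    · next h =>
      subst h
      rw [Function.update_of_ne]
      rintro rfl
      exact hpc (le_trans (le_trans le_sup_right hle) hy)
    · rfl
  | @com p e q x C S S' _ ih =>
    rcases hwt with _ | _ | ⟨hle, hC⟩
    intro r y hy
    have h1 := ih _ hC hpc r y hy
    rw [← h1]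
    simp only [CStore.upd]
    split
    · next h =>
      subst h
      rw [Function.update_of_ne]
      rintro rfl
      exact hpc (le_trans (le_trans le_sup_right hle) hy)
    · rfl
  | sel _ ih =>
    rcases hwt with _ | _ | _ | hC
    exact ih _ hC hpc
  | cond_then _ _ ih =>
    rcases hwt with _ | _ | _ | _ | ⟨h1, h2, hC⟩
    exact ih _ ((h1.mono' le_sup_left).graft hC) hpc
  | cond_else _ _ ih =>
    rcases hwt with _ | _ | _ | _ | ⟨h1, h2, hC⟩
    exact ih _ ((h2.mono' le_sup_left).graft hC) hpc
end

section
/- Termination-insensitive non-interference for loop-free choreographies: if C is a choreography without procedure calls, typable at pc = ⊥ under Γ, and Σ₁ ≡_low Σ₂, and ⟨C, Σ₁⟩ evaluates to Σ₁' and ⟨C, Σ₂⟩ evaluates to Σ₂' under the big-step semantics, then Σ₁' ≡_low Σ₂'. -/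
variable {FName Var Val PName SLbl : Type} {L : Type} [CompleteLattice L]

variable [DecidableEq PName] [DecidableEq Var]

/-! ### Auxiliary lemmas -/

lemma le_foldr_sup {α : Type*} (f : α → L) :
    ∀ (l : List α) (a : α), a ∈ l → f a ≤ l.foldr (fun x acc => f x ⊔ acc) ⊥ := by
  intro l
  induction l with
  | nil => intro a h; cases h
  | cons b t ih =>
    intro a h
    simp only [List.foldr]
    rcases List.mem_cons.mp h with h | h
    · subst h; exact le_sup_left
    · exact (ih a h).trans le_sup_right

omit [DecidableEq PName] [DecidableEq Var] in
lemma eval_agree (F : FName → List Val → Val) (low : L) (γ : Var → L)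
    (σ₁ σ₂ : Var → Val) (hσ : ∀ x, γ x ≤ low → σ₁ x = σ₂ x) :
    ∀ (e : Expr FName Var Val), e.label γ ≤ low → e.eval F σ₁ = e.eval F σ₂
  | .const v, _ => by simp [Expr.eval]
  | .var x, h => by
    rw [Expr.eval, Expr.eval]
    exact hσ x (by simpa [Expr.label] using h)
  | .app f es, h => by
    rw [Expr.eval, Expr.eval]
    congr 1
    apply List.map_congr_left
    rintro ⟨e', he'⟩ hmem
    apply eval_agree F low γ σ₁ σ₂ hσ e'
    refine le_trans ?_ h
    rw [Expr.label]
    exact le_foldr_sup (fun e => e.1.label γ) es.attach ⟨e', he'⟩ hmem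
termination_by e _ => sizeOf e
decreasing_by have := List.sizeOf_lt_of_mem he'; simp_wf; omega

omit [DecidableEq PName] [DecidableEq Var] in
lemma graft_assoc (A B C : Chor PName FName Var Val SLbl) :
    (A.graft B).graft C = A.graft (B.graft C) := by
  induction A with
  | nil => rfl
  | assign p x e C' ih => simp [Chor.graft, ih]
  | com p e q x C' ih => simp [Chor.graft, ih]
  | sel p q l C' ih => simp [Chor.graft, ih]
  | cond p e C₁ C₂ C' _ _ ih => simp [Chor.graft, ih]

lemma graft_comp {F : FName → List Val → Val} {tt : Val}
    {C : Chor PName FName Var Val SLbl} :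
    ∀ {C₁ : Chor PName FName Var Val SLbl} {S T : CStore PName Var Val},
      Eval F tt C₁ S T → ∀ {S'}, Eval F tt C T S' → Eval F tt (C₁.graft C) S S' := by
  intro C₁ S T h1
  induction h1 with
  | nil => intro S' h2; simpa [Chor.graft]
  | assign _ ih => intro S' h2; exact Eval.assign (ih h2)
  | com _ ih => intro S' h2; exact Eval.com (ih h2)
  | sel _ ih => intro S' h2; exact Eval.sel (ih h2)
  | cond_then hg _ ih => intro S' h2; exact Eval.cond_then hg (graft_assoc _ _ _ ▸ ih h2)
  | cond_else hg _ ih => intro S' h2; exact Eval.cond_else hg (graft_assoc _ _ _ ▸ ih h2)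

lemma graft_decomp {F : FName → List Val → Val} {tt : Val} :
    ∀ (C₁ : Chor PName FName Var Val SLbl) {C : Chor PName FName Var Val SLbl}
      {S S' : CStore PName Var Val},
      Eval F tt (C₁.graft C) S S' → ∃ T, Eval F tt C₁ S T ∧ Eval F tt C T S' := by
  intro C₁
  induction C₁ with
  | nil => intro C S S' h; exact ⟨S, Eval.nil, h⟩
  | assign p x e C' ih =>
    intro C S S' h
    cases h with
    | assign h' =>
      obtain ⟨T, h1, h2⟩ := ih h'
      exact ⟨T, Eval.assign h1, h2⟩
  | com p e q x C' ih =>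
    intro C S S' h
    cases h with
    | com h' =>
      obtain ⟨T, h1, h2⟩ := ih h'
      exact ⟨T, Eval.com h1, h2⟩
  | sel p q l C' ih =>
    intro C S S' h
    cases h with
    | sel h' =>
      obtain ⟨T, h1, h2⟩ := ih h'
      exact ⟨T, Eval.sel h1, h2⟩
  | cond p e A B C' ihA ihB ih =>
    intro C S S' h
    cases h with
    | cond_then hg hb =>
      obtain ⟨T, h1, h2⟩ := ihA hb
      obtain ⟨T', h1', h2'⟩ := ih h2
      exact ⟨T', Eval.cond_then hg (graft_comp h1 h1'), h2'⟩
    | cond_else hg hb =>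
      obtain ⟨T, h1, h2⟩ := ihB hb
      obtain ⟨T', h1', h2'⟩ := ih h2
      exact ⟨T', Eval.cond_else hg (graft_comp h1 h1'), h2'⟩

/-- Confinement: a choreography typable at a high pc does not modify
    low locations. -/
lemma confine (Γ : PName → Var → L) (low : L)
    {F : FName → List Val → Val} {tt : Val} :
    ∀ (C : Chor PName FName Var Val SLbl) {pc : L} {S S' : CStore PName Var Val},
      WT Γ pc C → ¬ pc ≤ low → Eval F tt C S S' →
      ∀ p x, Γ p x ≤ low → S p x = S' p x := by
  intro C
  induction C with
  | nil =>
    intro pc S S' _ _ hev p x _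
    cases hev; rfl
  | assign q y e C' ih =>
    intro pc S S' hwt hpc hev p x hx
    cases hwt with
    | assign hle hwt' =>
      cases hev with
      | assign hev' =>
        have hupd : (S.upd q y (e.eval F (S q))) p x = S p x := by
          simp only [CStore.upd]
          by_cases hpq : p = q
          · subst hpq
            simp only [if_pos rfl, Function.update]
            by_cases hxy : x = y
            · subst hxy
              exact absurd ((le_sup_right.trans hle).trans hx) hpc
            · simp [hxy]
          · simp [hpq]
        rw [← hupd] at *
        exact ih hwt' hpc hev' p x hx
  | com q e r y C' ih =>
    intro pc S S' hwt hpc hev p x hx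
    cases hwt with
    | com hle hwt' =>
      cases hev with
      | com hev' =>
        have hupd : (S.upd r y (e.eval F (S q))) p x = S p x := by
          simp only [CStore.upd]
          by_cases hpq : p = r
          · subst hpq
            simp only [if_pos rfl, Function.update]
            by_cases hxy : x = y
            · subst hxy
              exact absurd ((le_sup_right.trans hle).trans hx) hpc
            · simp [hxy]
          · simp [hpq]
        rw [← hupd] at *
        exact ih hwt' hpc hev' p x hx
  | sel q r l C' ih =>
    intro pc S S' hwt hpc hev p x hx
    cases hwt with
    | sel hwt' =>
      cases hev with
      | sel hev' => exact ih hwt' hpc hev' p x hx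
  | cond q e A B C' ihA ihB ih =>
    intro pc S S' hwt hpc hev p x hx
    cases hwt with
    | cond hA hB hC =>
      have hpc' : ¬ (pc ⊔ e.label (Γ q)) ≤ low := fun h => hpc (le_sup_left.trans h)
      cases hev with
      | cond_then hg hb =>
        obtain ⟨T, h1, h2⟩ := graft_decomp A hb
        exact (ihA hA hpc' h1 p x hx).trans (ih hC hpc h2 p x hx)
      | cond_else hg hb =>
        obtain ⟨T, h1, h2⟩ := graft_decomp B hb
        exact (ihB hB hpc' h1 p x hx).trans (ih hC hpc h2 p x hx)

/-- Generalised non-interference (arbitrary pc). -/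
lemma ni_gen (Γ : PName → Var → L) (low : L)
    {F : FName → List Val → Val} {tt : Val} :
    ∀ (C : Chor PName FName Var Val SLbl) {pc : L}
      {S₁ S₂ S₁' S₂' : CStore PName Var Val},
      WT Γ pc C → lowEquiv Γ low S₁ S₂ →
      Eval F tt C S₁ S₁' → Eval F tt C S₂ S₂' →
      lowEquiv Γ low S₁' S₂' := by
  intro C
  induction C with
  | nil =>
    intro pc S₁ S₂ S₁' S₂' _ hlow h₁ h₂
    cases h₁; cases h₂; exact hlow
  | assign q y e C' ih =>
    intro pc S₁ S₂ S₁' S₂' hwt hlow h₁ h₂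
    cases hwt with
    | assign hle hwt' =>
      cases h₁ with
      | assign h₁' =>
        cases h₂ with
        | assign h₂' =>
          refine ih hwt' ?_ h₁' h₂'
          intro p x hx
          simp only [CStore.upd]
          by_cases hpq : p = q
          · subst hpq
            simp only [if_pos rfl, if_true]
            by_cases hxy : x = y
            · subst hxy
              rw [Function.update_self, Function.update_self]
              exact eval_agree F low (Γ p) (S₁ p) (S₂ p)
                (fun z hz => hlow p z hz) e ((le_sup_left.trans hle).trans hx)
            · rw [Function.update_of_ne hxy, Function.update_of_ne hxy]
              exact hlow p x hx
          · simp only [if_neg hpq]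
            exact hlow p x hx
  | com q e r y C' ih =>
    intro pc S₁ S₂ S₁' S₂' hwt hlow h₁ h₂
    cases hwt with
    | com hle hwt' =>
      cases h₁ with
      | com h₁' =>
        cases h₂ with
        | com h₂' =>
          refine ih hwt' ?_ h₁' h₂'
          intro p x hx
          simp only [CStore.upd]
          by_cases hpq : p = r
          · subst hpq
            simp only [if_pos rfl, if_true]
            by_cases hxy : x = y
            · subst hxy
              rw [Function.update_self, Function.update_self]
              exact eval_agree F low (Γ q) (S₁ q) (S₂ q)
                (fun z hz => hlow q z hz) e ((le_sup_left.trans hle).trans hx)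
            · rw [Function.update_of_ne hxy, Function.update_of_ne hxy]
              exact hlow p x hx
          · simp only [if_neg hpq]
            exact hlow p x hx
  | sel q r l C' ih =>
    intro pc S₁ S₂ S₁' S₂' hwt hlow h₁ h₂
    cases hwt with
    | sel hwt' =>
      cases h₁ with
      | sel h₁' =>
        cases h₂ with
        | sel h₂' => exact ih hwt' hlow h₁' h₂'
  | cond q e A B C' ihA ihB ih =>
    intro pc S₁ S₂ S₁' S₂' hwt hlow h₁ h₂
    cases hwt with
    | cond hA hB hC =>
      by_cases hlab : e.label (Γ q) ≤ low
      · have hguard : e.eval F (S₁ q) = e.eval F (S₂ q) :=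
          eval_agree F low (Γ q) (S₁ q) (S₂ q) (fun z hz => hlow q z hz) e hlab
        cases h₁ with
        | cond_then hg₁ hb₁ =>
          cases h₂ with
          | cond_then hg₂ hb₂ =>
            obtain ⟨T₁, ha₁, hc₁⟩ := graft_decomp A hb₁
            obtain ⟨T₂, ha₂, hc₂⟩ := graft_decomp A hb₂
            exact ih hC (ihA hA hlow ha₁ ha₂) hc₁ hc₂
          | cond_else hg₂ _ => exact absurd (hguard ▸ hg₁) hg₂
        | cond_else hg₁ hb₁ =>
          cases h₂ with
          | cond_then hg₂ _ => exact absurd (hguard ▸ hg₂ : e.eval F (S₁ q) = tt) hg₁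
          | cond_else hg₂ hb₂ =>
            obtain ⟨T₁, ha₁, hc₁⟩ := graft_decomp B hb₁
            obtain ⟨T₂, ha₂, hc₂⟩ := graft_decomp B hb₂
            exact ih hC (ihB hB hlow ha₁ ha₂) hc₁ hc₂
      · have hpc' : ¬ (pc ⊔ e.label (Γ q)) ≤ low := fun h => hlab (le_sup_right.trans h)
        have key : ∀ {D : Chor PName FName Var Val SLbl} {S S'},
            WT Γ (pc ⊔ e.label (Γ q)) D → Eval F tt (D.graft C') S S' →
            ∃ T, (∀ p x, Γ p x ≤ low → S p x = T p x) ∧ Eval F tt C' T S' := by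
          intro D S S' hD hb
          obtain ⟨T, h1, h2⟩ := graft_decomp D hb
          exact ⟨T, confine Γ low D hD hpc' h1, h2⟩
        have step : ∀ {S₁ S₂ S₁' S₂' : CStore PName Var Val}
            {D₁ D₂ : Chor PName FName Var Val SLbl},
            WT Γ (pc ⊔ e.label (Γ q)) D₁ → WT Γ (pc ⊔ e.label (Γ q)) D₂ →
            lowEquiv Γ low S₁ S₂ →
            Eval F tt (D₁.graft C') S₁ S₁' → Eval F tt (D₂.graft C') S₂ S₂' →
            lowEquiv Γ low S₁' S₂' := by
          intro S₁ S₂ S₁' S₂' D₁ D₂ hD₁ hD₂ hlow' hb₁ hb₂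
          obtain ⟨T₁, hf₁, hc₁⟩ := key hD₁ hb₁
          obtain ⟨T₂, hf₂, hc₂⟩ := key hD₂ hb₂
          refine ih hC ?_ hc₁ hc₂
          intro p x hx
          exact (hf₁ p x hx).symm.trans ((hlow' p x hx).trans (hf₂ p x hx))
        cases h₁ with
        | cond_then hg₁ hb₁ =>
          cases h₂ with
          | cond_then hg₂ hb₂ => exact step hA hA hlow hb₁ hb₂
          | cond_else hg₂ hb₂ => exact step hA hB hlow hb₁ hb₂
        | cond_else hg₁ hb₁ =>
          cases h₂ with
          | cond_then hg₂ hb₂ => exact step hB hA hlow hb₁ hb₂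
          | cond_else hg₂ hb₂ => exact step hB hB hlow hb₁ hb₂

/-- Termination-insensitive non-interference for loop-free choreographies. -/
theorem noninterference (Γ : PName → Var → L) (low : L)
    (F : FName → List Val → Val) (tt : Val)
    (C : Chor PName FName Var Val SLbl)
    (S₁ S₂ S₁' S₂' : CStore PName Var Val)
    (hwt : WT Γ ⊥ C) (hlow : lowEquiv Γ low S₁ S₂)
    (h₁ : Eval F tt C S₁ S₁') (h₂ : Eval F tt C S₂ S₂') :
    lowEquiv Γ low S₁' S₂' :=
  ni_gen Γ low C hwt hlow h₁ h₂
end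

section
/- One-step soundness of constraint reconstruction for straight-line choreographies: if the constraint set generated from a choreography C (without procedure calls) is E, and environment Γ satisfies every constraint in E at program counter pc, then Γ; pc ⊢ C in the information-flow type system. -/
variable {FName Var Val PName SLbl : Type} {L : Type} [CompleteLattice L]

/-- A constraint: a symbolic bound together with a target location. -/
def Constraint (PName Var L : Type) :=
  ((PName → Var → L) → L → L) × (PName × Var)

/-- Constraint generation for choreographies without procedure calls.
    Writes emit `label(e) ⊔ pc ⊑ Γ(target)`; branch constraints of a
    conditional are evaluated at `pc ⊔ label(guard)`. -/
def genC : Chor PName FName Var Val SLbl → Set (Constraint PName Var L)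
  | .nil => ∅
  | .assign p x e C =>
      insert (fun Γ pc => e.label (Γ p) ⊔ pc, (p, x)) (genC C)
  | .com p e q x C =>
      insert (fun Γ pc => e.label (Γ p) ⊔ pc, (q, x)) (genC C)
  | .sel _ _ _ C => genC C
  | .cond p e C₁ C₂ C =>
      ((fun c : Constraint PName Var L =>
          (fun Γ pc => c.1 Γ (pc ⊔ e.label (Γ p)), c.2)) ''
        (genC C₁ ∪ genC C₂)) ∪ genC C

/-- `Γ` satisfies every constraint in `E` at `pc`. -/
def SatAll (Γ : PName → Var → L) (pc : L) (E : Set (Constraint PName Var L)) : Prop :=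
  ∀ c ∈ E, c.1 Γ pc ≤ Γ c.2.1 c.2.2

/-- One-step soundness of constraint reconstruction: satisfying the generated
    constraints at `pc` ensures typability at `pc`. -/
theorem genC_sound (Γ : PName → Var → L) (pc : L)
    (C : Chor PName FName Var Val SLbl)
    (h : SatAll Γ pc (genC C)) : WT Γ pc C := by
  induction C generalizing pc with
  | nil => exact WT.nil pc
  | assign p x e C ih =>
      exact .assign (h _ (Set.mem_insert _ _))
        (ih pc fun c hc => h c (Set.mem_insert_of_mem _ hc))
  | com p e q x C ih =>
      exact .com (h _ (Set.mem_insert _ _))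
        (ih pc fun c hc => h c (Set.mem_insert_of_mem _ hc))
  | sel p q l C ih => exact .sel (ih pc h)
  | cond p e C₁ C₂ C ih₁ ih₂ ih =>
      refine .cond (ih₁ _ fun c hc => ?_) (ih₂ _ fun c hc => ?_)
        (ih pc fun c hc => h c (Or.inr hc))
      · exact h _ (Or.inl ⟨c, Or.inl hc, rfl⟩)
      · exact h _ (Or.inl ⟨c, Or.inr hc, rfl⟩)
end

section
/- Completeness of constraint reconstruction for straight-line choreographies: if Γ; pc ⊢ C holds in the information-flow type system for a choreography C without procedure calls, then Γ satisfies at pc every constraint in the set generated from C. -/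
variable {FName Var Val PName SLbl : Type} {L : Type} [CompleteLattice L]

/-- Completeness of constraint reconstruction: typability at `pc` ensures that
    every generated constraint is satisfied at `pc`. -/
theorem genC_complete (Γ : PName → Var → L) (pc : L)
    (C : Chor PName FName Var Val SLbl)
    (h : WT Γ pc C) : SatAll Γ pc (genC C) := by
  induction h with
  | nil => intro c hc; exact absurd hc (Set.notMem_empty c)
  | assign hle _ ih =>
      intro c hc
      rcases hc with rfl | hc
      · exact hle
      · exact ih c hc
  | com hle _ ih =>
      intro c hc
      rcases hc with rfl | hc
      · exact hle
      · exact ih c hc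
  | sel _ ih => exact ih
  | cond _ _ _ ih1 ih2 ih =>
      intro c hc
      rcases hc with ⟨d, hd | hd, rfl⟩ | hc
      · exact ih1 d hd
      · exact ih2 d hd
      · exact ih c hc
end
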